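/- arXiv:2602.22167 — 5 statements merged into one kernel-verified Lean document; each statement's English description precedes it below -/
import Mathlib

section
/- Let n ≥ 2 and 1 ≤ H_i ≤ p. Then the multiplicative energy of the box B satisfies E(B) ≤ 3·|B|² + Σ_{z ∈ Z} f_0(z)², where B_0 is the symmetric box, Z = (B_0∖{0})/(B_0∖{0}), and f_0(z) = #{(x,y) ∈ B_0² : xz = y}. -/
open scoped Classical

/-- The box `B = {∑ xᵢωᵢ : Nᵢ+1 ≤ xᵢ ≤ Nᵢ+Hᵢ}` as a subset of the field. -/
def boxSet {n : ℕ} {F : Type} [Field F] (ω : Fin n → F) (N : Fin n → ℤ)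
    (H : Fin n → ℕ) : Set F :=
  {x | ∃ c : Fin n → ℤ, (∀ i, N i + 1 ≤ c i ∧ c i ≤ N i + H i) ∧
    x = ∑ i, (c i : F) * ω i}

/-- The symmetric box `B₀ = {∑ xᵢωᵢ : |xᵢ| ≤ Hᵢ}` as a subset of the field. -/
def symBoxSet {n : ℕ} {F : Type} [Field F] (ω : Fin n → F) (H : Fin n → ℕ) : Set F :=
  {x | ∃ c : Fin n → ℤ, (∀ i, |c i| ≤ (H i : ℤ)) ∧ x = ∑ i, (c i : F) * ω i}

/-- The ratio set `Z = (B₀∖{0})/(B₀∖{0})`. -/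
def ratioSet {n : ℕ} {F : Type} [Field F] (ω : Fin n → F) (H : Fin n → ℕ) : Set F :=
  {z | ∃ x y : F, x ∈ symBoxSet ω H ∧ y ∈ symBoxSet ω H ∧ x ≠ 0 ∧ y ≠ 0 ∧ x * z = y}

/-- `f₀(z) = #{(x,y) ∈ B₀² : xz = y}`. -/
noncomputable def f0 {n : ℕ} {F : Type} [Field F] (ω : Fin n → F) (H : Fin n → ℕ)
    (z : F) : ℕ :=
  Set.ncard {q : F × F | q.1 ∈ symBoxSet ω H ∧ q.2 ∈ symBoxSet ω H ∧ q.1 * z = q.2}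

/-- The multiplicative energy `E(A) = #{(a,b,c,d) ∈ A⁴ : ab = cd}`. -/
noncomputable def mulEnergySet {F : Type} [Field F] (A : Set F) : ℕ :=
  Set.ncard {q : F × F × F × F |
    q.1 ∈ A ∧ q.2.1 ∈ A ∧ q.2.2.1 ∈ A ∧ q.2.2.2 ∈ A ∧ q.1 * q.2.1 = q.2.2.1 * q.2.2.2}

/-!
Write `r_A(z) = #{(a, c) ∈ A² : a z = c}`. For `0 ∉ A`, `ab = cd` iff `c / a = b / d`, so
`E(A) = ∑_z r_A(z)²` and `∑_z r_A(z) = |A|²`. Since `B - B ⊆ B₀`, subtracting one fixed solution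
embeds the solutions in `B` of `a z = c` into those in `B₀`, so `r_B(z) ≤ f₀(z)`, and two distinct
solutions produce `z ∈ Z`. If `0 ∉ B` this gives `r_B² ≤ r_B + [z ∈ Z] f₀²`, hence
`E(B) ≤ |B|² + ∑_Z f₀²`. If `0 ∈ B`, then `E(B) = E(A) + #{(a, b) ∈ B² : ab = 0}²` with
`A = B ∖ {0}`, the second term is at most `(2|B| - 1)²`, and the extra solution `(0, 0)` gives
`(r_A + 1)² ≤ f₀²` on `Z`, so `E(A) + 2|A|² ≤ ∑_Z f₀²`.
-/
open Finset
open scoped Pointwise Combinatorics.Additive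

section RatioReps
variable {F : Type*} [Field F] {A S : Finset F} {z : F}

noncomputable def ratioReps (A : Finset F) (z : F) : Finset (F × F) :=
  {q ∈ A ×ˢ A | q.1 * z = q.2}

@[simp]
lemma mem_ratioReps {q : F × F} : q ∈ ratioReps A z ↔ q.1 ∈ A ∧ q.2 ∈ A ∧ q.1 * z = q.2 := by
  simp [ratioReps, and_assoc]

lemma ratioReps_zero_of_zero_notMem (h0 : 0 ∉ A) : ratioReps A 0 = ∅ := by
  ext ⟨a, c⟩
  simp only [mem_ratioReps, mul_zero, notMem_empty, iff_false]
  rintro ⟨-, hc, rfl⟩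
  exact h0 hc

lemma card_ratioReps_le_of_sub_subset (hS : A - A ⊆ S) :
    #(ratioReps A z) ≤ #(ratioReps S z) := by
  obtain h | ⟨q₀, hq₀⟩ := (ratioReps A z).eq_empty_or_nonempty
  · simp [h]
  rw [mem_ratioReps] at hq₀
  refine card_le_card_of_injOn (fun q => (q.1 - q₀.1, q.2 - q₀.2)) (fun q hq => ?_) ?_
  · rw [mem_coe, mem_ratioReps] at hq
    rw [mem_coe, mem_ratioReps]
    exact ⟨hS (sub_mem_sub hq.1 hq₀.1), hS (sub_mem_sub hq.2.1 hq₀.2.1),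
      by rw [sub_mul, hq.2.2, hq₀.2.2]⟩
  · intro q _ q' _ h
    simp only [Prod.mk.injEq, sub_left_inj] at h
    exact Prod.ext h.1 h.2

lemma mem_div_of_two_le_card_ratioReps (hS : A - A ⊆ S) (hz : z ≠ 0)
    (h2 : 2 ≤ #(ratioReps A z)) : z ∈ S.erase 0 / S.erase 0 := by
  obtain ⟨q, hq, q', hq', hne⟩ := one_lt_card.mp h2
  rw [mem_ratioReps] at hq hq'
  have hx : q.1 - q'.1 ≠ 0 := by
    refine sub_ne_zero.mpr fun h => hne (Prod.ext h ?_)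
    rw [← hq.2.2, ← hq'.2.2, h]
  have hxz : (q.1 - q'.1) * z = q.2 - q'.2 := by rw [sub_mul, hq.2.2, hq'.2.2]
  refine mem_div.mpr ⟨q.2 - q'.2, mem_erase.mpr ⟨?_, hS (sub_mem_sub hq.2.1 hq'.2.1)⟩,
    q.1 - q'.1, mem_erase.mpr ⟨hx, hS (sub_mem_sub hq.1 hq'.1)⟩, ?_⟩
  · rw [← hxz]; exact mul_ne_zero hx hz
  · rw [← hxz, mul_div_cancel_left₀ _ hx]

lemma ratioReps_eq_insert_erase_zero (h0 : (0 : F) ∈ A) (hz : z ≠ 0) :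
    ratioReps A z = insert (0, 0) (ratioReps (A.erase 0) z) := by
  ext ⟨a, c⟩
  simp only [mem_ratioReps, mem_insert, mem_erase, Prod.mk.injEq]
  constructor
  · rintro ⟨ha, hc, rfl⟩
    by_cases ha0 : a = 0
    · simp [ha0]
    · exact Or.inr ⟨⟨ha0, ha⟩, ⟨mul_ne_zero ha0 hz, hc⟩, rfl⟩
  · rintro (⟨rfl, rfl⟩ | ⟨⟨-, ha⟩, ⟨-, hc⟩, rfl⟩)
    · simp [h0]
    · exact ⟨ha, hc, rfl⟩

lemma card_filter_mul_eq_zero_le : #{q ∈ A ×ˢ A | q.1 * q.2 = 0} ≤ #A + #(A.erase 0) := by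
  calc #{q ∈ A ×ˢ A | q.1 * q.2 = 0} ≤ #(({0} ×ˢ A) ∪ (A.erase 0 ×ˢ {0})) := by
        refine card_le_card fun q hq => ?_
        simp only [mem_filter, mem_product, mul_eq_zero] at hq
        simp only [mem_union, mem_product, mem_singleton, mem_erase]
        tauto
    _ ≤ #A + #(A.erase 0) := by
        refine (card_union_le _ _).trans_eq ?_
        rw [card_product, card_product, card_singleton, one_mul, mul_one]

variable [Fintype F]

lemma sum_card_ratioReps (h0 : 0 ∉ A) : ∑ z, #(ratioReps A z) = #A ^ 2 := by
  rw [sq, ← card_product, card_eq_sum_card_fiberwise (f := fun q => q.2 / q.1)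
    (t := univ) fun _ _ => mem_univ _]
  refine sum_congr rfl fun z _ => congrArg card ?_
  ext ⟨a, c⟩
  have ha0 : a ∈ A → a ≠ 0 := fun ha h => h0 (h ▸ ha)
  simp only [mem_ratioReps, mem_filter, mem_product]
  constructor
  · rintro ⟨ha, hc, rfl⟩
    exact ⟨⟨ha, hc⟩, mul_div_cancel_left₀ _ (ha0 ha)⟩
  · rintro ⟨⟨ha, hc⟩, rfl⟩
    exact ⟨ha, hc, mul_div_cancel₀ _ (ha0 ha)⟩

lemma mulEnergy_eq_sum_card_ratioReps_sq (h0 : 0 ∉ A) :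
    Eₘ[A] = ∑ z, #(ratioReps A z) ^ 2 := by
  have ha0 : ∀ a ∈ A, a ≠ 0 := fun a ha h => h0 (h ▸ ha)
  rw [mulEnergy_eq_card_filter, card_eq_sum_card_fiberwise (f := fun q => q.2.1 / q.1.1)
    (t := univ) fun _ _ => mem_univ _]
  refine sum_congr rfl fun z _ => ?_
  rw [sq, ← card_product]
  refine card_nbij' (fun q => ((q.1.1, q.2.1), (q.2.2, q.1.2)))
    (fun q => ((q.1.1, q.2.2), (q.1.2, q.2.1))) ?_ ?_ (fun _ _ => rfl) (fun _ _ => rfl)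
  · rintro ⟨⟨a, b⟩, c, d⟩ hq
    simp only [coe_filter, mem_filter, mem_product, Set.mem_ofPred_eq, mem_coe,
      mem_ratioReps] at hq ⊢
    obtain ⟨⟨⟨⟨ha, hb⟩, hc, hd⟩, habcd⟩, rfl⟩ := hq
    refine ⟨⟨ha, hc, mul_div_cancel₀ _ (ha0 a ha)⟩, hd, hb, ?_⟩
    rw [mul_div_assoc', div_eq_iff (ha0 a ha)]
    linear_combination -habcd
  · rintro ⟨⟨a, c⟩, d, b⟩ hq
    simp only [coe_filter, mem_filter, mem_product, Set.mem_ofPred_eq, mem_coe,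
      mem_ratioReps] at hq ⊢
    obtain ⟨⟨ha, hc, rfl⟩, hd, hb, rfl⟩ := hq
    exact ⟨⟨⟨⟨ha, hb⟩, hc, hd⟩, by ring⟩, mul_div_cancel_left₀ _ (ha0 a ha)⟩

lemma mulEnergy_eq_mulEnergy_erase_zero_add :
    Eₘ[A] = Eₘ[A.erase 0] + #{q ∈ A ×ˢ A | q.1 * q.2 = 0} ^ 2 := by
  have hfiber : ∀ x ≠ (0 : F),
      {q ∈ A.erase 0 ×ˢ A.erase 0 | q.1 * q.2 = x} = {q ∈ A ×ˢ A | q.1 * q.2 = x} := by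
    intro x hx
    ext ⟨a, b⟩
    simp only [mem_filter, mem_product, mem_erase]
    constructor
    · rintro ⟨⟨⟨-, ha⟩, -, hb⟩, rfl⟩
      exact ⟨⟨ha, hb⟩, rfl⟩
    · rintro ⟨⟨ha, hb⟩, rfl⟩
      exact ⟨⟨⟨left_ne_zero_of_mul hx, ha⟩, right_ne_zero_of_mul hx, hb⟩, rfl⟩
  have hzero : {q ∈ A.erase 0 ×ˢ A.erase 0 | q.1 * q.2 = 0} = ∅ := by
    ext ⟨a, b⟩
    simp +contextual [mem_erase]
  rw [mulEnergy_eq_sum_sq, mulEnergy_eq_sum_sq, Fintype.sum_eq_add_sum_compl 0,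
    Fintype.sum_eq_add_sum_compl 0, hzero, card_empty, zero_pow two_ne_zero, zero_add, add_comm]
  congr 1
  refine sum_congr rfl fun x hx => ?_
  rw [hfiber x (by simpa using hx)]

lemma mulEnergy_le_of_zero_notMem (h0 : 0 ∉ A) (hS : A - A ⊆ S) :
    Eₘ[A] ≤ #A ^ 2 + ∑ z ∈ S.erase 0 / S.erase 0, #(ratioReps S z) ^ 2 := by
  have hpoint : ∀ z, #(ratioReps A z) ^ 2 ≤
      #(ratioReps A z) + if z ∈ S.erase 0 / S.erase 0 then #(ratioReps S z) ^ 2 else 0 := by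
    intro z
    by_cases hr : #(ratioReps A z) ≤ 1
    · exact (show _ ≤ _ by nlinarith).trans (Nat.le_add_right _ _)
    have hz : z ≠ 0 := by rintro rfl; simp [ratioReps_zero_of_zero_notMem h0] at hr
    rw [if_pos (mem_div_of_two_le_card_ratioReps hS hz (by omega))]
    have := card_ratioReps_le_of_sub_subset hS (z := z)
    nlinarith
  calc Eₘ[A] = ∑ z, #(ratioReps A z) ^ 2 := mulEnergy_eq_sum_card_ratioReps_sq h0
    _ ≤ _ := sum_le_sum fun z _ => hpoint z
    _ = _ := by rw [sum_add_distrib, sum_card_ratioReps h0, sum_ite_mem, univ_inter]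

lemma mulEnergy_erase_zero_add_le (h0 : 0 ∈ A) (hS : A - A ⊆ S) :
    Eₘ[A.erase 0] + 2 * #(A.erase 0) ^ 2 ≤
      ∑ z ∈ S.erase 0 / S.erase 0, #(ratioReps S z) ^ 2 := by
  have hA0 : 0 ∉ A.erase 0 := notMem_erase 0 A
  have hpoint : ∀ z, #(ratioReps (A.erase 0) z) ^ 2 + 2 * #(ratioReps (A.erase 0) z) ≤
      if z ∈ S.erase 0 / S.erase 0 then #(ratioReps S z) ^ 2 else 0 := by
    intro z
    by_cases hr : #(ratioReps (A.erase 0) z) = 0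
    · simp [hr]
    have hz : z ≠ 0 := by rintro rfl; simp [ratioReps_zero_of_zero_notMem hA0] at hr
    have hcard : #(ratioReps A z) = #(ratioReps (A.erase 0) z) + 1 := by
      rw [ratioReps_eq_insert_erase_zero h0 hz, card_insert_of_notMem (by simp)]
    rw [if_pos (mem_div_of_two_le_card_ratioReps hS hz (by omega))]
    have := card_ratioReps_le_of_sub_subset hS (z := z)
    nlinarith
  calc Eₘ[A.erase 0] + 2 * #(A.erase 0) ^ 2
      = ∑ z, (#(ratioReps (A.erase 0) z) ^ 2 + 2 * #(ratioReps (A.erase 0) z)) := by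
        rw [sum_add_distrib, ← mul_sum, sum_card_ratioReps hA0,
          mulEnergy_eq_sum_card_ratioReps_sq hA0]
    _ ≤ _ := sum_le_sum fun z _ => hpoint z
    _ = _ := by rw [sum_ite_mem, univ_inter]

theorem mulEnergy_le_of_sub_subset (hS : A - A ⊆ S) :
    Eₘ[A] ≤ 3 * #A ^ 2 + ∑ z ∈ S.erase 0 / S.erase 0, #(ratioReps S z) ^ 2 := by
  by_cases h0 : (0 : F) ∈ A
  · have hrest := mulEnergy_erase_zero_add_le h0 hS
    have hzero : #{q ∈ A ×ˢ A | q.1 * q.2 = 0} ≤ 2 * #(A.erase 0) + 1 := by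
      have := card_filter_mul_eq_zero_le (A := A)
      have := card_erase_add_one h0
      omega
    have hzero_sq := Nat.pow_le_pow_left hzero 2
    rw [mulEnergy_eq_mulEnergy_erase_zero_add, ← card_erase_add_one h0]
    nlinarith
  · have := mulEnergy_le_of_zero_notMem h0 hS
    omega

end RatioReps

section Box
variable {n : ℕ} {F : Type} [Field F]

lemma mulEnergySet_coe (A : Finset F) : mulEnergySet (A : Set F) = Eₘ[A] := by
  rw [mulEnergy_eq_card_filter, ← Set.ncard_coe_finset, mulEnergySet]
  refine Set.ncard_congr (fun q _ => ((q.1, q.2.1), (q.2.2.1, q.2.2.2))) ?_ ?_ ?_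
  · rintro ⟨a, b, c, d⟩ hq
    simpa [and_assoc] using hq
  · rintro ⟨a, b, c, d⟩ ⟨a', b', c', d'⟩ - - h
    simp_all
  · rintro ⟨⟨a, b⟩, c, d⟩ hq
    exact ⟨(a, b, c, d), by simpa [and_assoc] using hq, rfl⟩

variable [Fintype F]

lemma f0_eq_card_ratioReps (ω : Fin n → F) (H : Fin n → ℕ) (z : F) :
    f0 ω H z = #(ratioReps (symBoxSet ω H).toFinset z) := by
  rw [f0, ← Set.ncard_coe_finset]
  congr 1
  ext q
  simp

lemma filter_mem_ratioSet_eq (ω : Fin n → F) (H : Fin n → ℕ) :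
    univ.filter (fun z : F => z ∈ ratioSet ω H) =
      (symBoxSet ω H).toFinset.erase 0 / (symBoxSet ω H).toFinset.erase 0 := by
  ext z
  simp only [mem_filter, mem_univ, true_and, mem_div, mem_erase, Set.mem_toFinset]
  constructor
  · rintro ⟨x, y, hx, hy, hx0, hy0, rfl⟩
    exact ⟨x * z, ⟨hy0, hy⟩, x, ⟨hx0, hx⟩, mul_div_cancel_left₀ _ hx0⟩
  · rintro ⟨y, ⟨hy0, hy⟩, x, ⟨hx0, hx⟩, rfl⟩
    exact ⟨x, y, hx, hy, hx0, hy0, mul_div_cancel₀ _ hx0⟩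

lemma sub_subset_symBoxSet (ω : Fin n → F) (N : Fin n → ℤ) (H : Fin n → ℕ) :
    (boxSet ω N H).toFinset - (boxSet ω N H).toFinset ⊆ (symBoxSet ω H).toFinset := by
  intro x hx
  obtain ⟨a, ha, b, hb, rfl⟩ := mem_sub.mp hx
  rw [Set.mem_toFinset] at ha hb ⊢
  obtain ⟨c, hc, rfl⟩ := ha
  obtain ⟨d, hd, rfl⟩ := hb
  refine ⟨c - d, fun i => ?_, ?_⟩
  · have := hc i
    have := hd i
    rw [Pi.sub_apply, abs_le]
    omega
  · simp only [← sum_sub_distrib, Pi.sub_apply, Int.cast_sub, sub_mul]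

lemma card_toFinset_boxSet_le (ω : Fin n → F) (N : Fin n → ℤ) (H : Fin n → ℕ) :
    #(boxSet ω N H).toFinset ≤ ∏ i, H i := by
  have hsub : (boxSet ω N H).toFinset ⊆
      (Fintype.piFinset fun i => Icc (N i + 1) (N i + H i)).image
        fun c => ∑ i, (c i : F) * ω i := by
    intro x hx
    obtain ⟨c, hc, rfl⟩ := Set.mem_toFinset.mp hx
    exact mem_image_of_mem _ (Fintype.mem_piFinset.mpr fun i => mem_Icc.mpr (hc i))
  calc #(boxSet ω N H).toFinset ≤ _ := card_le_card hsub
    _ ≤ _ := card_image_le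
    _ = ∏ i, H i := by
      rw [Fintype.card_piFinset]
      refine prod_congr rfl fun i _ => ?_
      rw [Int.card_Icc]
      omega

end Box

theorem stmt_13_general (n : ℕ)
    (F : Type) [Field F] [Fintype F]
    (ω : Fin n → F)
    (N : Fin n → ℤ) (H : Fin n → ℕ) :
    mulEnergySet (boxSet ω N H) ≤
      3 * (∏ i, H i) ^ 2 +
        ∑ z ∈ Finset.univ.filter (fun z : F => z ∈ ratioSet ω H), (f0 ω H z) ^ 2 := by
  rw [← Set.coe_toFinset (boxSet ω N H), mulEnergySet_coe, filter_mem_ratioSet_eq]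
  simp_rw [f0_eq_card_ratioReps]
  calc _ ≤ _ := mulEnergy_le_of_sub_subset (sub_subset_symBoxSet ω N H)
    _ ≤ _ := by gcongr; exact card_toFinset_boxSet_le ω N H

/-- `E(B) ≤ 3|B|² + ∑_{z∈Z} f₀(z)²`. -/
theorem stmt_13 (n : ℕ) (hn : 2 ≤ n) (p : ℕ) (hp : p.Prime)
    (F : Type) [Field F] [Fintype F] (hF : Fintype.card F = p ^ n)
    (ω : Fin n → F)
    (hω : Function.Bijective (fun c : Fin n → ZMod p => ∑ i, ((c i).val : F) * ω i))
    (N : Fin n → ℤ) (H : Fin n → ℕ) (hH1 : ∀ i, 1 ≤ H i) (hHp : ∀ i, H i ≤ p) :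
    mulEnergySet (boxSet ω N H) ≤
      3 * (∏ i, H i) ^ 2 +
        ∑ z ∈ Finset.univ.filter (fun z : F => z ∈ ratioSet ω H), (f0 ω H z) ^ 2 :=
  stmt_13_general n F ω N H
end

section
/- For every z ∈ 𝔽_{p^n}, the number of solutions (x,y) ∈ B × B to xz = y is at most the number of solutions (x,y) ∈ B_0 × B_0 to xz = y; that is, f(z) ≤ f_0(z), where f(z) = #{(x,y) ∈ B² : xz = y} and f_0(z) = #{(x,y) ∈ B_0² : xz = y}. -/
/-! Any two points of the box differ by a point of the symmetric box, so translating the solution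
set of `x * z = y` in `B × B` by one of its own points maps it injectively into the solution set
in `B₀ × B₀`. -/

theorem Set.ncard_le_ncard_of_forall_sub_mem {G : Type*} [AddGroup G] {S T : Set G}
    (hT : T.Finite) (hST : ∀ a ∈ S, ∀ b ∈ S, a - b ∈ T) : S.ncard ≤ T.ncard := by
  rcases S.eq_empty_or_nonempty with rfl | ⟨b, hb⟩
  · simp
  · exact Set.ncard_le_ncard_of_injOn (· - b) (fun a ha => hST a ha b hb)
      sub_left_injective.injOn hT

section Boxes

variable {n : ℕ} {F : Type} [Field F] {ω : Fin n → F} {N : Fin n → ℤ} {H : Fin n → ℕ}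

theorem sub_mem_symBoxSet {x x' : F} (hx : x ∈ boxSet ω N H) (hx' : x' ∈ boxSet ω N H) :
    x - x' ∈ symBoxSet ω H := by
  obtain ⟨c, hc, rfl⟩ := hx
  obtain ⟨c', hc', rfl⟩ := hx'
  refine ⟨c - c', fun i => ?_, ?_⟩
  · have := hc i
    have := hc' i
    rw [Pi.sub_apply, abs_le]
    omega
  · simp only [← Finset.sum_sub_distrib, Pi.sub_apply, Int.cast_sub, sub_mul]

end Boxes

theorem stmt_14_general (n : ℕ)
    (F : Type) [Field F] [Fintype F]
    (ω : Fin n → F)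
    (N : Fin n → ℤ) (H : Fin n → ℕ)
    (z : F) :
    Set.ncard {q : F × F |
        q.1 ∈ boxSet ω N H ∧ q.2 ∈ boxSet ω N H ∧ q.1 * z = q.2} ≤
      Set.ncard {q : F × F |
        q.1 ∈ symBoxSet ω H ∧ q.2 ∈ symBoxSet ω H ∧ q.1 * z = q.2} := by
  refine Set.ncard_le_ncard_of_forall_sub_mem (Set.toFinite _) ?_
  rintro ⟨x, y⟩ ⟨hx, hy, hxy⟩ ⟨x', y'⟩ ⟨hx', hy', hxy'⟩
  exact ⟨sub_mem_symBoxSet hx hx', sub_mem_symBoxSet hy hy', by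
    simpa only [Prod.fst_sub, Prod.snd_sub, sub_mul] using congrArg₂ (· - ·) hxy hxy'⟩

/-- for every `z ∈ 𝔽_{p^n}`,
`f(z) = #{(x,y) ∈ B² : xz = y} ≤ f₀(z) = #{(x,y) ∈ B₀² : xz = y}`. -/
theorem stmt_14 (n : ℕ) (hn : 2 ≤ n) (p : ℕ) (hp : p.Prime)
    (F : Type) [Field F] [Fintype F] (hF : Fintype.card F = p ^ n)
    (ω : Fin n → F)
    (hω : Function.Bijective (fun c : Fin n → ZMod p => ∑ i, ((c i).val : F) * ω i))
    (N : Fin n → ℤ) (H : Fin n → ℕ) (hH1 : ∀ i, 1 ≤ H i) (hHp : ∀ i, H i ≤ p)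
    (z : F) :
    Set.ncard {q : F × F |
        q.1 ∈ boxSet ω N H ∧ q.2 ∈ boxSet ω N H ∧ q.1 * z = q.2} ≤
      Set.ncard {q : F × F |
        q.1 ∈ symBoxSet ω H ∧ q.2 ∈ symBoxSet ω H ∧ q.1 * z = q.2} :=
  stmt_14_general n F ω N H z
end

section
/- Let n ≥ 2, suppose 1 ≤ H_1 ≤ H_2 ≤ ⋯ ≤ H_n < √(p/2), and let z ∈ 𝔽_{p^n} with z ∉ 𝔽_p. Then the first successive minimum of the box D = {(x_1,…,x_n,y_1,…,y_n) ∈ ℝ^{2n} : |x_i| ≤ H_i, |y_i| ≤ H_i for 1 ≤ i ≤ n} with respect to the lattice Λ_z satisfies λ_1(D, Λ_z) ≥ H_{n−1}^{−1}. -/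
/-- The lattice `Λ_z = {(x,y) ∈ ℤ^{2n} : z·∑ xᵢωᵢ = ∑ yᵢωᵢ in 𝔽_{p^n}}`, as a set. -/
def lambdaSet (n : ℕ) (F : Type) [Field F] (ω : Fin n → F) (z : F) :
    Set ((Fin n → ℤ) × (Fin n → ℤ)) :=
  {v | z * ∑ i, (v.1 i : F) * ω i = ∑ i, (v.2 i : F) * ω i}

/-- The first successive minimum of the box
`D = {(x,y) ∈ ℝ^{2n} : |xᵢ| ≤ Hᵢ, |yᵢ| ≤ Hᵢ}` with respect to the lattice `Λ_z`:
the infimum of those `t > 0` for which `t·D` contains a nonzero point of `Λ_z`. -/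
noncomputable def firstMinBox (n : ℕ) (F : Type) [Field F] (ω : Fin n → F)
    (H : Fin n → ℕ) (z : F) : ℝ :=
  sInf {t : ℝ | 0 < t ∧ ∃ v : (Fin n → ℤ) × (Fin n → ℤ), v ≠ 0 ∧
    v ∈ lambdaSet n F ω z ∧
    (∀ i, |(v.1 i : ℝ)| ≤ t * H i) ∧ (∀ i, |(v.2 i : ℝ)| ≤ t * H i)}

/-
The box `t·D` with `t < H_{n-1}⁻¹` forces all coordinates except the last ones `x = xₙ`,
`y = yₙ` to vanish, so a lattice point in it satisfies `z·x·ωₙ = y·ωₙ` with `|x|, |y| < p`.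
If `x ≢ 0 (mod p)` then `z = y/x` lies in the prime field; otherwise `x = 0`, hence `y ≡ 0`,
hence `y = 0`, and the point is zero.
-/

theorem Int.eq_zero_of_abs_lt_of_cast_eq_zero {R : Type*} [AddGroupWithOne R] (p : ℕ)
    [CharP R p] {x : ℤ} (hx : |x| < p) (h : (x : R) = 0) : x = 0 :=
  Int.eq_zero_of_abs_lt_dvd ((CharP.intCast_eq_zero_iff R p x).mp h) hx

theorem mem_range_natCast_of_mul_intCast_eq {F : Type*} [Field F] (p : ℕ) [Fact p.Prime]
    [CharP F p] {z : F} {x y : ℤ} (hx : (x : F) ≠ 0) (h : z * x = y) :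
    z ∈ Set.range (Nat.cast : ℕ → F) := by
  refine ⟨((y : ZMod p) * (x : ZMod p)⁻¹).val, ?_⟩
  rw [ZMod.natCast_val]
  show ZMod.castHom (dvd_refl p) F _ = z
  rw [map_mul, map_inv₀, map_intCast, map_intCast, mul_inv_eq_iff_eq_mul₀ hx, h]

theorem eq_zero_of_mul_intCast_eq_intCast {F : Type*} [Field F] (p : ℕ) [Fact p.Prime]
    [CharP F p] {z : F} (hz : z ∉ Set.range (Nat.cast : ℕ → F)) {x y : ℤ} (hx : |x| < p)
    (hy : |y| < p) (h : z * x = y) : x = 0 ∧ y = 0 := by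
  by_cases hx0 : (x : F) = 0
  · have hy0 : (y : F) = 0 := by rw [← h, hx0, mul_zero]
    exact ⟨Int.eq_zero_of_abs_lt_of_cast_eq_zero p hx hx0,
      Int.eq_zero_of_abs_lt_of_cast_eq_zero p hy hy0⟩
  · exact absurd (mem_range_natCast_of_mul_intCast_eq p hx0 h) hz

theorem ne_zero_of_injective_sum_val_mul {ι F : Type*} [Fintype ι] [DecidableEq ι]
    [Semiring F] {p : ℕ} [Fact (1 < p)] {ω : ι → F}
    (hω : Function.Injective fun c : ι → ZMod p => ∑ i, ((c i).val : F) * ω i) (j : ι) :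
    ω j ≠ 0 := by
  intro h0
  have hsingle : Pi.single j (1 : ZMod p) = 0 := hω <| by
    simp only [ZMod.val_zero, Pi.zero_apply, Nat.cast_zero, zero_mul, Finset.sum_const_zero]
    exact Finset.sum_eq_zero fun i _ => by rcases eq_or_ne i j with rfl | hij <;> simp [*]
  simpa using congrFun hsingle j

section Box

variable {n : ℕ} {F : Type} [Field F] {ω : Fin n → F} {H : Fin n → ℕ} {z : F}

def boxScales (n : ℕ) (F : Type) [Field F] (ω : Fin n → F) (H : Fin n → ℕ) (z : F) : Set ℝ :=
  {t : ℝ | 0 < t ∧ ∃ v : (Fin n → ℤ) × (Fin n → ℤ), v ≠ 0 ∧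
    v ∈ lambdaSet n F ω z ∧
    (∀ i, |(v.1 i : ℝ)| ≤ t * H i) ∧ (∀ i, |(v.2 i : ℝ)| ≤ t * H i)}

theorem firstMinBox_eq_sInf_boxScales :
    firstMinBox n F ω H z = sInf (boxScales n F ω H z) := rfl

theorem boxScales_nonempty (p : ℕ) [CharP F p] (hp : 0 < p) {j : Fin n} (hj : 0 < H j) :
    (boxScales n F ω H z).Nonempty := by
  classical
  have hpR : (0 : ℝ) < p := by exact_mod_cast hp
  refine ⟨p, hpR, (Pi.single j (p : ℤ), 0), fun h => ?_, ?_, fun i => ?_,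
    fun i => by simp; positivity⟩
  · simpa [hp.ne'] using congrFun (congrArg Prod.fst h) j
  · have hcast : ∀ i, (((Pi.single j (p : ℤ) : Fin n → ℤ) i : ℤ) : F) = 0 := fun i => by
      rcases eq_or_ne i j with rfl | hi <;> simp [*]
    simp [lambdaSet, hcast]
  · rcases eq_or_ne i j with rfl | hi
    · simpa using le_mul_of_one_le_right hpR.le (by exact_mod_cast hj)
    · simp [hi]; positivity

theorem eq_zero_of_abs_le_mul {t : ℝ} (ht : 0 ≤ t) {j k : Fin n} (hjk : ∀ i, i ≠ k → H i ≤ H j)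
    (htj : t * H j < 1) {w : Fin n → ℤ} (hw : ∀ i, |(w i : ℝ)| ≤ t * H i) {i : Fin n}
    (hi : i ≠ k) : w i = 0 := by
  have hlt : |(w i : ℝ)| < 1 := calc
    |(w i : ℝ)| ≤ t * H i := hw i
    _ ≤ t * H j := mul_le_mul_of_nonneg_left (by exact_mod_cast hjk i hi) ht
    _ < 1 := htj
  exact Int.abs_lt_one_iff.mp (by exact_mod_cast hlt)

theorem inv_le_of_mem_boxScales (p : ℕ) [Fact p.Prime] [CharP F p] {j k : Fin n}
    (hjk : ∀ i, i ≠ k → H i ≤ H j) (hω : ω k ≠ 0) (hHk : (H k : ℝ) < p)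
    (hz : z ∉ Set.range (Nat.cast : ℕ → F)) {t : ℝ} (ht : t ∈ boxScales n F ω H z) :
    (H j : ℝ)⁻¹ ≤ t := by
  obtain ⟨ht0, v, hv0, hv, hx, hy⟩ := ht
  by_contra! htj
  have hHj : 0 < (H j : ℝ) := inv_pos.mp (ht0.trans htj)
  have htHj : t * H j < 1 := by
    simpa using (lt_inv_mul_iff₀' hHj (b := 1)).mp (by simpa using htj)
  have ht1 : t ≤ 1 := htj.le.trans (inv_le_one_of_one_le₀ (by exact_mod_cast hHj))
  have hlast : ∀ w : Fin n → ℤ, (∀ i, |(w i : ℝ)| ≤ t * H i) → |w k| < p := fun w hw => by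
    have : |(w k : ℝ)| < p := calc
      |(w k : ℝ)| ≤ t * H k := hw k
      _ ≤ H k := mul_le_of_le_one_left (Nat.cast_nonneg _) ht1
      _ < p := hHk
    exact_mod_cast this
  have hx0 := fun i (hi : i ≠ k) => eq_zero_of_abs_le_mul ht0.le hjk htHj hx hi
  have hy0 := fun i (hi : i ≠ k) => eq_zero_of_abs_le_mul ht0.le hjk htHj hy hi
  have hsum : ∀ w : Fin n → ℤ, (∀ i, i ≠ k → w i = 0) → ∑ i, (w i : F) * ω i = w k * ω k :=
    fun w hw => Fintype.sum_eq_single k fun i hi => by simp [hw i hi]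
  have hzk : z * v.1 k = v.2 k :=
    mul_right_cancel₀ hω (by rw [mul_assoc, ← hsum _ hx0, ← hsum _ hy0]; exact hv)
  obtain ⟨hxk0, hyk0⟩ := eq_zero_of_mul_intCast_eq_intCast p hz (hlast _ hx) (hlast _ hy) hzk
  refine hv0 (Prod.ext (funext fun i => ?_) (funext fun i => ?_))
  · rcases eq_or_ne i k with rfl | hi
    exacts [hxk0, hx0 i hi]
  · rcases eq_or_ne i k with rfl | hi
    exacts [hyk0, hy0 i hi]

end Box

/-- for `n ≥ 2`, `1 ≤ H₁ ≤ ⋯ ≤ Hₙ < √(p/2)` and `z ∉ 𝔽_p`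
(the prime subfield, i.e. the range of the natural-number cast), the first
successive minimum of the box `D` with respect to `Λ_z` is at least `H_{n−1}⁻¹`. -/
theorem stmt_16 (n : ℕ) (hn : 2 ≤ n) (p : ℕ) (hp : p.Prime)
    (F : Type) [Field F] [Fintype F] (hF : Fintype.card F = p ^ n)
    (ω : Fin n → F)
    (hω : Function.Bijective (fun c : Fin n → ZMod p => ∑ i, ((c i).val : F) * ω i))
    (H : Fin n → ℕ) (hmono : Monotone H)
    (hHp : (H ⟨n - 1, by omega⟩ : ℝ) < Real.sqrt ((p : ℝ) / 2))
    (z : F) (hz : z ∉ Set.range (Nat.cast : ℕ → F)) :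
    ((H ⟨n - 2, by omega⟩ : ℝ))⁻¹ ≤ firstMinBox n F ω H z := by
  have : Fact p.Prime := ⟨hp⟩
  have : CharP F p := charP_of_card_eq_prime_pow hF
  set j : Fin n := ⟨n - 2, by omega⟩
  set k : Fin n := ⟨n - 1, by omega⟩
  have hjk : ∀ i, i ≠ k → H i ≤ H j := fun i hi => hmono <| by
    have : (i : ℕ) ≠ n - 1 := fun h => hi (Fin.ext h)
    show (i : ℕ) ≤ n - 2
    omega
  have hp2 : (2 : ℝ) ≤ p := by exact_mod_cast hp.two_le
  have hHk : (H k : ℝ) < p :=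
    hHp.trans_le (Real.sqrt_le_iff.mpr ⟨by positivity, by nlinarith⟩)
  rw [firstMinBox_eq_sInf_boxScales]
  rcases (H j).eq_zero_or_pos with hj0 | hj
  · rw [hj0, Nat.cast_zero, inv_zero]
    exact Real.sInf_nonneg fun t ht => ht.1.le
  · exact le_csInf (boxScales_nonempty p hp.pos hj) fun t ht =>
      inv_le_of_mem_boxScales p hjk (ne_zero_of_injective_sum_val_mul hω.injective k) hHk hz ht
end

section
/- Let z, z' ∈ 𝔽_{p^n} and let u = (x_1,…,x_n,y_1,…,y_n) ∈ ℤ^{2n} be nonzero with |x_i| < p and |y_i| < p for all i. If u ∈ Λ_z ∩ Λ_{z'} and z, z' ∉ 𝔽_p, then z = z'. (In particular, the minimal lattice vector associated to z ∈ Z∖𝔽_p uniquely determines z.) -/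
section PrimeBasis

variable {n p : ℕ} {F : Type*} [Field F] {ω : Fin n → F}

lemma charP_of_bijective_sum_val_mul [Fact p.Prime]
    (hω : Function.Bijective (fun c : Fin n → ZMod p => ∑ i, ((c i).val : F) * ω i)) :
    CharP F p :=
  have : Fintype F := Fintype.ofBijective _ hω
  charP_of_card_eq_prime_pow (f := n) ((Fintype.card_of_bijective hω).symm.trans (by simp))

lemma eq_zero_of_sum_intCast_mul_eq_zero [NeZero p] [CharP F p]
    (hω : Function.Injective (fun c : Fin n → ZMod p => ∑ i, ((c i).val : F) * ω i))
    {v : Fin n → ℤ} (hv : ∀ i, |v i| < p) (h : ∑ i, (v i : F) * ω i = 0) : v = 0 := by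
  have hvp : (fun i => (v i : ZMod p)) = 0 := hω <| by
    simpa only [ZMod.natCast_val, ZMod.cast_intCast', Pi.zero_apply, ZMod.val_zero,
      Nat.cast_zero, zero_mul, Finset.sum_const_zero] using h
  funext i
  exact Int.eq_zero_of_abs_lt_dvd
    ((ZMod.intCast_zmod_eq_zero_iff_dvd _ p).mp (congrFun hvp i)) (hv i)

end PrimeBasis

theorem stmt_17_general (n : ℕ) (p : ℕ) (hp : p.Prime)
    (F : Type) [Field F]
    (ω : Fin n → F)
    (hω : Function.Bijective (fun c : Fin n → ZMod p => ∑ i, ((c i).val : F) * ω i))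
    (z z' : F)
    (u : (Fin n → ℤ) × (Fin n → ℤ)) (hu : u ≠ 0)
    (hu1 : ∀ i, |u.1 i| < (p : ℤ)) (hu2 : ∀ i, |u.2 i| < (p : ℤ))
    (huz : u ∈ lambdaSet n F ω z) (huz' : u ∈ lambdaSet n F ω z') :
    z = z' := by
  have : Fact p.Prime := ⟨hp⟩
  have : CharP F p := charP_of_bijective_sum_val_mul hω
  have hX : ∑ i, (u.1 i : F) * ω i ≠ 0 := by
    intro hX
    have hY : ∑ i, (u.2 i : F) * ω i = 0 := by rw [← huz, hX, mul_zero]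
    exact hu (Prod.ext (eq_zero_of_sum_intCast_mul_eq_zero hω.injective hu1 hX)
      (eq_zero_of_sum_intCast_mul_eq_zero hω.injective hu2 hY))
  exact mul_right_cancel₀ hX (huz.trans huz'.symm)

/-- if a nonzero vector `u ∈ ℤ^{2n}` with all coordinates of absolute
value `< p` lies in `Λ_z ∩ Λ_{z'}` for `z, z' ∉ 𝔽_p` (the prime subfield, i.e. the
range of the natural-number cast), then `z = z'`; the minimal lattice vector
associated to `z ∈ Z∖𝔽_p` uniquely determines `z`. -/
theorem stmt_17 (n : ℕ) (hn : 2 ≤ n) (p : ℕ) (hp : p.Prime)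
    (F : Type) [Field F] [Fintype F] (hF : Fintype.card F = p ^ n)
    (ω : Fin n → F)
    (hω : Function.Bijective (fun c : Fin n → ZMod p => ∑ i, ((c i).val : F) * ω i))
    (z z' : F)
    (hz : z ∉ Set.range (Nat.cast : ℕ → F)) (hz' : z' ∉ Set.range (Nat.cast : ℕ → F))
    (u : (Fin n → ℤ) × (Fin n → ℤ)) (hu : u ≠ 0)
    (hu1 : ∀ i, |u.1 i| < (p : ℤ)) (hu2 : ∀ i, |u.2 i| < (p : ℤ))
    (huz : u ∈ lambdaSet n F ω z) (huz' : u ∈ lambdaSet n F ω z') :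
    z = z' :=
  stmt_17_general n p hp F ω hω z z' u hu hu1 hu2 huz huz'
end

section
/- Let z', z'' ∈ 𝔽_{p^n} with z' ≠ z''. Suppose u = (u_1/p, …, u_n/p, v_1/p, …, v_n/p) ∈ Λ*_{z'} ∩ Λ*_{z''}, where u_1,…,u_n,v_1,…,v_n are integers with |u_i| < p and |v_i| < p for all i. Then u_i = 0 and v_i = 0 for all 1 ≤ i ≤ n; in particular u = 0, so a nonzero dual vector of this form lies in Λ*_z for at most one z. -/
/-- Membership of the vector `(u₁/p,…,uₙ/p,v₁/p,…,vₙ/p) ∈ ℝ^{2n}` in the polar dual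
lattice `Λ*_z`: its pairing with every element of `Λ_z` is an integer. -/
def memDualLambda (n : ℕ) (F : Type) [Field F] (ω : Fin n → F) (z : F)
    (p : ℕ) (u v : Fin n → ℤ) : Prop :=
  ∀ w ∈ lambdaSet n F ω z,
    ∃ m : ℤ, (∑ i, (u i : ℝ) / p * (w.1 i : ℝ)) + ∑ i, (v i : ℝ) / p * (w.2 i : ℝ) = m

/-!
Write `S c = ∑ cᵢωᵢ` for `c ∈ ℤⁿ`. Since `ω` is an `𝔽_p`-basis, `S` is onto with kernel `pℤⁿ`,
and `(u/p, v/p) ∈ Λ*_z` says `u·x + v·y ≡ 0 [p]` whenever `z·S x = S y`.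
Choose `x` with `S x = (z' - z'')⁻¹ ωⱼ` and `y', y''` with `S y' = z'·S x`, `S y'' = z''·S x`.
Then `S (y' - y'') = ωⱼ`, so `y' - y'' ≡ eⱼ [p]`, and subtracting the two congruences gives
`vⱼ ≡ 0 [p]`. Testing `Λ*_{z'}` against `(eⱼ, y)` with `S y = z'ωⱼ` then gives `uⱼ ≡ 0 [p]`,
and `|uⱼ|, |vⱼ| < p` finishes.
-/

open Matrix

section DualLattice

variable {n : ℕ} {F : Type} [Field F] {ω : Fin n → F} {z : F} {p : ℕ} {u v : Fin n → ℤ}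

theorem mk_mem_lambdaSet_iff {x y : Fin n → ℤ} :
    (x, y) ∈ lambdaSet n F ω z ↔
      z * Fintype.linearCombination ℤ ω x = Fintype.linearCombination ℤ ω y := by
  simp [lambdaSet, Fintype.linearCombination_apply, zsmul_eq_mul]

theorem dvd_of_memDualLambda [NeZero p] (hd : memDualLambda n F ω z p u v)
    {x y : Fin n → ℤ} (hxy : (x, y) ∈ lambdaSet n F ω z) :
    (p : ℤ) ∣ u ⬝ᵥ x + v ⬝ᵥ y := by
  obtain ⟨m, hm⟩ := hd _ hxy
  simp only [div_mul_eq_mul_div, ← Finset.sum_div, ← add_div,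
    div_eq_iff (NeZero.ne (p : ℝ))] at hm
  exact ⟨m, by simp only [dotProduct]; exact_mod_cast hm.trans (mul_comm _ _)⟩

theorem surjective_linearCombination_int
    (hω : Function.Surjective (fun c : Fin n → ZMod p => ∑ i, ((c i).val : F) * ω i)) :
    Function.Surjective (Fintype.linearCombination ℤ ω) := by
  intro t
  obtain ⟨c, rfl⟩ := hω t
  exact ⟨fun i => (c i).val, by simp [Fintype.linearCombination_apply, zsmul_eq_mul]⟩

theorem dvd_of_linearCombination_int_eq_zero [NeZero p] [CharP F p]
    (hω : Function.Injective (fun c : Fin n → ZMod p => ∑ i, ((c i).val : F) * ω i))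
    {c : Fin n → ℤ} (hc : Fintype.linearCombination ℤ ω c = 0) (i : Fin n) :
    (p : ℤ) ∣ c i := by
  have hc_mod : (fun i => (c i : ZMod p)) = 0 :=
    hω <| by simpa [Fintype.linearCombination_apply, zsmul_eq_mul, ZMod.natCast_val] using hc
  exact (ZMod.intCast_zmod_eq_zero_iff_dvd _ p).mp (congrFun hc_mod i)

variable [NeZero p]

theorem dvd_snd_of_memDualLambda_of_ne (hS : Function.Surjective (Fintype.linearCombination ℤ ω))
    (hker : ∀ c, Fintype.linearCombination ℤ ω c = 0 → ∀ i, (p : ℤ) ∣ c i)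
    {z' z'' : F} (hzz : z' ≠ z'')
    (hd' : memDualLambda n F ω z' p u v) (hd'' : memDualLambda n F ω z'' p u v) (j : Fin n) :
    (p : ℤ) ∣ v j := by
  classical
  set S := Fintype.linearCombination ℤ ω
  obtain ⟨x, hx⟩ := hS ((z' - z'')⁻¹ * ω j)
  obtain ⟨y', hy'⟩ := hS (z' * S x)
  obtain ⟨y'', hy''⟩ := hS (z'' * S x)
  have h' : (p : ℤ) ∣ u ⬝ᵥ x + v ⬝ᵥ y' :=
    dvd_of_memDualLambda hd' (mk_mem_lambdaSet_iff.mpr hy'.symm)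
  have h'' : (p : ℤ) ∣ u ⬝ᵥ x + v ⬝ᵥ y'' :=
    dvd_of_memDualLambda hd'' (mk_mem_lambdaSet_iff.mpr hy''.symm)
  have hker_j : S (y' - y'' - Pi.single j 1) = 0 := by
    rw [map_sub, map_sub, hy', hy'', hx, Fintype.linearCombination_apply_single, one_smul,
      ← sub_mul, ← mul_assoc, mul_inv_cancel₀ (sub_ne_zero.mpr hzz), one_mul, sub_self]
  have hv_ker : (p : ℤ) ∣ v ⬝ᵥ (y' - y'' - Pi.single j 1) :=
    Finset.dvd_sum fun i _ => (hker _ hker_j i).mul_left _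
  have hv_diff : (p : ℤ) ∣ v ⬝ᵥ (y' - y'') := by
    simpa only [add_sub_add_left_eq_sub, ← dotProduct_sub] using dvd_sub h' h''
  have := hv_diff.sub hv_ker
  rwa [dotProduct_sub _ (y' - y''), sub_sub_cancel, dotProduct_single, mul_one] at this

theorem dvd_fst_of_memDualLambda (hS : Function.Surjective (Fintype.linearCombination ℤ ω))
    (hv : ∀ i, (p : ℤ) ∣ v i)
    (hd : memDualLambda n F ω z p u v) (j : Fin n) :
    (p : ℤ) ∣ u j := by
  classical
  obtain ⟨y, hy⟩ := hS (z * Fintype.linearCombination ℤ ω (Pi.single j 1))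
  have h : (p : ℤ) ∣ u ⬝ᵥ Pi.single j 1 + v ⬝ᵥ y :=
    dvd_of_memDualLambda hd (mk_mem_lambdaSet_iff.mpr hy.symm)
  rw [dotProduct_single, mul_one] at h
  exact (dvd_add_left (Finset.dvd_sum fun i _ => (hv i).mul_right _)).mp h

end DualLattice

theorem stmt_18_general (n : ℕ) (p : ℕ) (hp : p.Prime)
    (F : Type) [Field F] [Fintype F] (hF : Fintype.card F = p ^ n)
    (ω : Fin n → F)
    (hω : Function.Bijective (fun c : Fin n → ZMod p => ∑ i, ((c i).val : F) * ω i))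
    (z' z'' : F) (hzz : z' ≠ z'')
    (u v : Fin n → ℤ) (hu : ∀ i, |u i| < (p : ℤ)) (hv : ∀ i, |v i| < (p : ℤ))
    (hd' : memDualLambda n F ω z' p u v) (hd'' : memDualLambda n F ω z'' p u v) :
    ∀ i, u i = 0 ∧ v i = 0 := by
  have := Fact.mk hp
  have : CharP F p := charP_of_card_eq_prime_pow hF
  have hS := surjective_linearCombination_int hω.surjective
  have hv_dvd := dvd_snd_of_memDualLambda_of_ne hS
    (fun _ hc => dvd_of_linearCombination_int_eq_zero hω.injective hc) hzz hd' hd''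
  have hu_dvd := dvd_fst_of_memDualLambda hS hv_dvd hd'
  exact fun i => ⟨Int.eq_zero_of_abs_lt_dvd (hu_dvd i) (hu i),
    Int.eq_zero_of_abs_lt_dvd (hv_dvd i) (hv i)⟩

/-- if `z' ≠ z''` and `(u₁/p,…,uₙ/p,v₁/p,…,vₙ/p) ∈ Λ*_{z'} ∩ Λ*_{z''}`
with all `|uᵢ| < p`, `|vᵢ| < p`, then all `uᵢ = 0` and `vᵢ = 0`; in particular a
nonzero dual vector of this form lies in `Λ*_z` for at most one `z`. -/
theorem stmt_18 (n : ℕ) (hn : 2 ≤ n) (p : ℕ) (hp : p.Prime)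
    (F : Type) [Field F] [Fintype F] (hF : Fintype.card F = p ^ n)
    (ω : Fin n → F)
    (hω : Function.Bijective (fun c : Fin n → ZMod p => ∑ i, ((c i).val : F) * ω i))
    (z' z'' : F) (hzz : z' ≠ z'')
    (u v : Fin n → ℤ) (hu : ∀ i, |u i| < (p : ℤ)) (hv : ∀ i, |v i| < (p : ℤ))
    (hd' : memDualLambda n F ω z' p u v) (hd'' : memDualLambda n F ω z'' p u v) :
    ∀ i, u i = 0 ∧ v i = 0 :=
  stmt_18_general n p hp F hF ω hω z' z'' hzz u v hu hv hd' hd''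
end
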